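/- Let a be bounded measurable with a ≥ 0 a.e. Suppose there exists w ∈ 𝒩_∞ with E_∞(w) = m_∞ (a ground state of the autonomous problem) such that c_α ∬ a(x) |w(x)|^p |w(y)|^p |x−y|^{α−N} dx dy > 0 (which holds in particular if w > 0 a.e. and a > 0 on a set of positive measure). Then m < m_∞, where m := inf{E_a(u) : u ∈ 𝒩_a} and m_∞ := inf{E_∞(u) : u ∈ 𝒩_∞}. -/

import Mathlib

/-!
Scale the autonomous ground state `w` onto the Nehari set of the perturbed problem. On a Nehari set
the energy equals `(1/2 - 1/(2p)) ‖·‖_s²`. Since the `a`-part of the nonlocal term of `w` is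
positive, `‖w‖_s² = D_∞(w) < D_a(w)`, so the Nehari scaling factor `t = (‖w‖_s² / D_a(w))^{1/(2p-2)}`
is `< 1`, and `m ≤ E_a(t w) = t² E_∞(w) < E_∞(w) = m_∞`.
-/

open MeasureTheory Filter

noncomputable section

/-- Euclidean space `ℝ^N`. -/
abbrev RN (N : ℕ) : Type := EuclideanSpace ℝ (Fin N)

/-- The `H^s` bilinear form `⟨u,v⟩_s`. -/
def gIn (N : ℕ) (s : ℝ) (u v : RN N → ℝ) : ℝ :=
  (∫ x : RN N, u x * v x) +
    ∫ q : RN N × RN N, (u q.1 - u q.2) * (v q.1 - v q.2) * ‖q.1 - q.2‖ ^ (-((N : ℝ) + 2 * s))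

/-- The `H^s` norm `‖u‖_s`. -/
def HsNorm (N : ℕ) (s : ℝ) (u : RN N → ℝ) : ℝ := Real.sqrt (gIn N s u u)

/-- The fractional Sobolev space `H^s = {u ∈ L² : ‖u‖_s < ∞}`. -/
def HsSet (N : ℕ) (s : ℝ) : Set (RN N → ℝ) :=
  {u | MemLp u 2 volume ∧
    (∫⁻ q : RN N × RN N,
        ENNReal.ofReal ((u q.1 - u q.2) ^ 2 * ‖q.1 - q.2‖ ^ (-((N : ℝ) + 2 * s)))) < ⊤}

/-- The Riesz potential normalization constant `c_α`. -/
def cRiesz (N : ℕ) (α : ℝ) : ℝ :=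
  Real.Gamma (((N : ℝ) - α) / 2) / (Real.Gamma (α / 2) * Real.pi ^ ((N : ℝ) / 2) * 2 ^ α)

/-- The nonlocal term `D_a(u) = c_α ∬ (1+a(x)) |u(x)|^p |u(y)|^p |x-y|^{α-N}`. -/
def Dfn (N : ℕ) (α p : ℝ) (a u : RN N → ℝ) : ℝ :=
  cRiesz N α *
    ∫ q : RN N × RN N, (1 + a q.1) * |u q.1| ^ p * |u q.2| ^ p * ‖q.1 - q.2‖ ^ (α - (N : ℝ))

/-- The nonlocal term `T_a(u)[v] = c_α ∬ (1+a(x)) |u(y)|^p |u(x)|^{p-2} u(x) v(x) |x-y|^{α-N}`. -/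
def Tfn (N : ℕ) (α p : ℝ) (a u v : RN N → ℝ) : ℝ :=
  cRiesz N α *
    ∫ q : RN N × RN N,
      (1 + a q.1) * |u q.2| ^ p * |u q.1| ^ (p - 2) * u q.1 * v q.1 * ‖q.1 - q.2‖ ^ (α - (N : ℝ))

/-- The energy functional `E_a(u) = ½‖u‖_s² - (1/(2p)) D_a(u)`. -/
def Efn (N : ℕ) (s α p : ℝ) (a u : RN N → ℝ) : ℝ :=
  (1 / 2) * gIn N s u u - (1 / (2 * p)) * Dfn N α p a u

/-- The Nehari set `𝒩_a`. -/
def Nehari (N : ℕ) (s α p : ℝ) (a : RN N → ℝ) : Set (RN N → ℝ) :=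
  {u | u ∈ HsSet N s ∧ ¬(u =ᵐ[volume] (0 : RN N → ℝ)) ∧ gIn N s u u = Dfn N α p a u}

def groundLevel (N : ℕ) (s α p : ℝ) (a : RN N → ℝ) : ℝ :=
  sInf (Efn N s α p a '' Nehari N s α p a)

variable {N : ℕ} {s α p : ℝ} {a u : RN N → ℝ}

theorem gIn_const_mul_self (t : ℝ) (u : RN N → ℝ) :
    gIn N s (fun x => t * u x) (fun x => t * u x) = t ^ 2 * gIn N s u u := by
  have hL2 : (fun x => t * u x * (t * u x)) = fun x => t ^ 2 * (u x * u x) := by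
    funext x; ring
  have hGagliardo : (fun q : RN N × RN N =>
      (t * u q.1 - t * u q.2) * (t * u q.1 - t * u q.2) * ‖q.1 - q.2‖ ^ (-((N : ℝ) + 2 * s))) =
      fun q => t ^ 2 *
        ((u q.1 - u q.2) * (u q.1 - u q.2) * ‖q.1 - q.2‖ ^ (-((N : ℝ) + 2 * s))) := by
    funext q; ring
  simp only [gIn, hL2, hGagliardo, integral_const_mul, mul_add]

theorem Dfn_const_mul {t : ℝ} (ht : 0 ≤ t) (u : RN N → ℝ) :
    Dfn N α p a (fun x => t * u x) = t ^ p * t ^ p * Dfn N α p a u := by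
  have habs : ∀ x, |t * u x| ^ p = t ^ p * |u x| ^ p := fun x => by
    rw [abs_mul, abs_of_nonneg ht, Real.mul_rpow ht (abs_nonneg _)]
  have hintegrand : (fun q : RN N × RN N =>
      (1 + a q.1) * |t * u q.1| ^ p * |t * u q.2| ^ p * ‖q.1 - q.2‖ ^ (α - (N : ℝ))) =
      fun q => t ^ p * t ^ p *
        ((1 + a q.1) * |u q.1| ^ p * |u q.2| ^ p * ‖q.1 - q.2‖ ^ (α - (N : ℝ))) := by
    funext q; rw [habs, habs]; ring
  rw [Dfn, Dfn, hintegrand, integral_const_mul]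
  ring

theorem const_mul_mem_HsSet (t : ℝ) (hu : u ∈ HsSet N s) :
    (fun x => t * u x) ∈ HsSet N s := by
  refine ⟨hu.1.const_mul t, ?_⟩
  have hintegrand : ∀ q : RN N × RN N,
      ENNReal.ofReal ((t * u q.1 - t * u q.2) ^ 2 * ‖q.1 - q.2‖ ^ (-((N : ℝ) + 2 * s))) =
      ENNReal.ofReal (t ^ 2) *
        ENNReal.ofReal ((u q.1 - u q.2) ^ 2 * ‖q.1 - q.2‖ ^ (-((N : ℝ) + 2 * s))) := fun q => by
    rw [← ENNReal.ofReal_mul (sq_nonneg t)]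
    ring_nf
  simp only [hintegrand]
  rw [lintegral_const_mul' _ _ ENNReal.ofReal_ne_top]
  exact ENNReal.mul_lt_top ENNReal.ofReal_lt_top hu.2

theorem gagliardo_self_nonneg (u : RN N → ℝ) : 0 ≤ ∫ q : RN N × RN N,
    (u q.1 - u q.2) * (u q.1 - u q.2) * ‖q.1 - q.2‖ ^ (-((N : ℝ) + 2 * s)) :=
  integral_nonneg fun _ => mul_nonneg (mul_self_nonneg _) (Real.rpow_nonneg (norm_nonneg _) _)

theorem gIn_self_nonneg (u : RN N → ℝ) : 0 ≤ gIn N s u u :=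
  add_nonneg (integral_nonneg fun _ => mul_self_nonneg _) (gagliardo_self_nonneg u)

theorem gIn_self_pos (hu : MemLp u 2 volume) (hu0 : ¬u =ᵐ[volume] 0) : 0 < gIn N s u u := by
  have hint : Integrable (fun x => u x * u x) volume := by
    simpa only [pow_two] using hu.integrable_sq
  have hL2 : 0 < ∫ x, u x * u x := by
    refine (integral_pos_iff_support_of_nonneg (fun x => mul_self_nonneg (u x)) hint).2 ?_
    rw [Function.support_mul, Set.inter_self, pos_iff_ne_zero]
    exact fun h => hu0 (ae_iff.2 h)
  exact add_pos_of_pos_of_nonneg hL2 (gagliardo_self_nonneg u)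

theorem gIn_lt_Dfn_of_mem_Nehari_zero (hu : u ∈ Nehari N s α p (fun _ => (0 : ℝ)))
    (ha : 0 < cRiesz N α * ∫ q : RN N × RN N,
      a q.1 * |u q.1| ^ p * |u q.2| ^ p * ‖q.1 - q.2‖ ^ (α - (N : ℝ))) :
    gIn N s u u < Dfn N α p a u := by
  obtain ⟨huHs, hu0, hNehari⟩ := hu
  set F : RN N × RN N → ℝ := fun q => |u q.1| ^ p * |u q.2| ^ p * ‖q.1 - q.2‖ ^ (α - (N : ℝ))
  set G : RN N × RN N → ℝ := fun q => a q.1 * F q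
  have hD0 : Dfn N α p (fun _ => (0 : ℝ)) u = cRiesz N α * ∫ q, F q := by
    simp only [Dfn, F, add_zero, one_mul]
  have hpos := gIn_self_pos (s := s) huHs.1 hu0
  -- Both integrands are integrable because their Bochner integrals are nonzero.
  have hFint : Integrable F volume := .of_integral_ne_zero fun h => by
    rw [hNehari, hD0, h, mul_zero] at hpos
    exact hpos.false
  have hGint : Integrable G volume := .of_integral_ne_zero fun h => by
    simp only [G, F, ← mul_assoc] at h
    rw [h, mul_zero] at ha
    exact ha.false
  have hDa : Dfn N α p a u = Dfn N α p (fun _ => (0 : ℝ)) u + cRiesz N α * ∫ q, G q := by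
    have hsplit : (fun q : RN N × RN N =>
        (1 + a q.1) * |u q.1| ^ p * |u q.2| ^ p * ‖q.1 - q.2‖ ^ (α - (N : ℝ))) =
        fun q => F q + G q := by
      funext q; simp only [F, G]; ring
    rw [Dfn, hsplit, integral_add hFint hGint, mul_add, hD0]
  simp only [G, F, ← mul_assoc] at hDa
  rw [hDa, ← hNehari]
  linarith

theorem Efn_eq_of_mem_Nehari (hu : u ∈ Nehari N s α p a) :
    Efn N s α p a u = (1 / 2 - 1 / (2 * p)) * gIn N s u u := by
  rw [Efn, ← hu.2.2]
  ring

theorem one_half_sub_one_div_two_mul_pos (hp : 1 < p) : 0 < 1 / 2 - 1 / (2 * p) := by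
  have : 1 / (2 * p) < 1 / 2 := one_div_lt_one_div_of_lt two_pos (by linarith)
  linarith

theorem groundLevel_le (hp : 1 < p) (hu : u ∈ Nehari N s α p a) :
    groundLevel N s α p a ≤ Efn N s α p a u := by
  refine csInf_le ⟨0, ?_⟩ ⟨u, hu, rfl⟩
  rintro _ ⟨v, hv, rfl⟩
  rw [Efn_eq_of_mem_Nehari hv]
  exact mul_nonneg (one_half_sub_one_div_two_mul_pos hp).le (gIn_self_nonneg v)

theorem exists_const_mul_mem_Nehari (hp : 1 < p) (hu : u ∈ HsSet N s) (hu0 : ¬u =ᵐ[volume] 0)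
    (hgD : gIn N s u u < Dfn N α p a u) :
    ∃ t : ℝ, 0 < t ∧ t < 1 ∧ (fun x => t * u x) ∈ Nehari N s α p a := by
  have hg := gIn_self_pos (s := s) hu.1 hu0
  have hratio : 0 < gIn N s u u / Dfn N α p a u := div_pos hg (hg.trans hgD)
  have he : 0 < 2 * p - 2 := by linarith
  set t := (gIn N s u u / Dfn N α p a u) ^ (2 * p - 2)⁻¹
  have ht0 : 0 < t := Real.rpow_pos_of_pos hratio _
  have hte : t ^ (2 * p - 2) = gIn N s u u / Dfn N α p a u := by
    rw [← Real.rpow_mul hratio.le, inv_mul_cancel₀ he.ne', Real.rpow_one]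
  have hpow : t ^ p * t ^ p = t ^ 2 * t ^ (2 * p - 2) := by
    rw [← Real.rpow_add ht0, ← Real.rpow_two, ← Real.rpow_add ht0]
    ring_nf
  refine ⟨t, ht0, Real.rpow_lt_one hratio.le ((div_lt_one (hg.trans hgD)).2 hgD) (by positivity),
    const_mul_mem_HsSet t hu, fun h => hu0 ?_, ?_⟩
  · filter_upwards [h] with x hx
    exact (mul_eq_zero.1 hx).resolve_left ht0.ne'
  · rw [gIn_const_mul_self, Dfn_const_mul ht0.le, hpow, hte, mul_assoc,
      div_mul_cancel₀ _ (hg.trans hgD).ne']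

theorem stmt_17_general {N : ℕ} {s α p : ℝ}
    (hp : 2 ≤ p)
    (a : RN N → ℝ)
    (hw : ∃ w ∈ Nehari N s α p (fun _ => (0 : ℝ)),
      Efn N s α p (fun _ => (0 : ℝ)) w = sInf {r : ℝ | ∃ v ∈ Nehari N s α p (fun _ => (0 : ℝ)), Efn N s α p (fun _ => (0 : ℝ)) v = r} ∧
      0 < cRiesz N α * ∫ q : RN N × RN N,
        a q.1 * |w q.1| ^ p * |w q.2| ^ p * ‖q.1 - q.2‖ ^ (α - (N : ℝ))) :
    sInf {r : ℝ | ∃ v ∈ Nehari N s α p a, Efn N s α p a v = r} < sInf {r : ℝ | ∃ v ∈ Nehari N s α p (fun _ => (0 : ℝ)), Efn N s α p (fun _ => (0 : ℝ)) v = r} := by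
  obtain ⟨w, hwN, hwE, hwA⟩ := hw
  have hp1 : 1 < p := by linarith
  obtain ⟨t, ht0, ht1, htN⟩ := exists_const_mul_mem_Nehari hp1 hwN.1 hwN.2.1
    (gIn_lt_Dfn_of_mem_Nehari_zero hwN hwA)
  have hg := gIn_self_pos (s := s) hwN.1.1 hwN.2.1
  calc groundLevel N s α p a
      ≤ Efn N s α p a (fun x => t * w x) := groundLevel_le hp1 htN
    _ = (1 / 2 - 1 / (2 * p)) * (t ^ 2 * gIn N s w w) := by
      rw [Efn_eq_of_mem_Nehari htN, gIn_const_mul_self]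
    _ < (1 / 2 - 1 / (2 * p)) * gIn N s w w :=
      mul_lt_mul_of_pos_left (mul_lt_of_lt_one_left hg (pow_lt_one₀ ht0.le ht1 two_ne_zero))
        (one_half_sub_one_div_two_mul_pos hp1)
    _ = Efn N s α p (fun _ => (0 : ℝ)) w := (Efn_eq_of_mem_Nehari hwN).symm
    _ = groundLevel N s α p (fun _ => (0 : ℝ)) := hwE

theorem stmt_17 {N : ℕ} (hN : 1 ≤ N) {s α p : ℝ}
    (hs0 : 0 < s) (hs1 : s < 1) (hα0 : 0 < α) (hαN : α < (N : ℝ))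
    (hp : 2 ≤ p)
    (hlow : ((N : ℝ) - 2 * s) / ((N : ℝ) + α) < 1 / p)
    (hhigh : 1 / p < (N : ℝ) / ((N : ℝ) + α))
    (a : RN N → ℝ) (ha_meas : Measurable a) (ha_bdd : ∃ M : ℝ, ∀ x, |a x| ≤ M)
    (ha_nonneg : ∀ᵐ x ∂(volume : Measure (RN N)), 0 ≤ a x)
    (hw : ∃ w ∈ Nehari N s α p (fun _ => (0 : ℝ)),
      Efn N s α p (fun _ => (0 : ℝ)) w = sInf {r : ℝ | ∃ v ∈ Nehari N s α p (fun _ => (0 : ℝ)), Efn N s α p (fun _ => (0 : ℝ)) v = r} ∧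
      0 < cRiesz N α * ∫ q : RN N × RN N,
        a q.1 * |w q.1| ^ p * |w q.2| ^ p * ‖q.1 - q.2‖ ^ (α - (N : ℝ))) :
    sInf {r : ℝ | ∃ v ∈ Nehari N s α p a, Efn N s α p a v = r} < sInf {r : ℝ | ∃ v ∈ Nehari N s α p (fun _ => (0 : ℝ)), Efn N s α p (fun _ => (0 : ℝ)) v = r} :=
  stmt_17_general hp a hw
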